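/- The number of colored permutations in Z_α ≀ S_n with last color 0 and flag descent statistic equal to k equals the number of such permutations with flag descent statistic equal to α(n−1) − k, for every integer k. -/

import Mathlib

open Finset Polynomial

/-- The `i`-th position (0-indexed) among the first `n-1` positions, as an element of `Fin n`. -/
def lo (n : ℕ) (i : Fin (n - 1)) : Fin n := ⟨i.val, by have := i.isLt; omega⟩

/-- The `(i+1)`-st position, as an element of `Fin n`. -/
def hi (n : ℕ) (i : Fin (n - 1)) : Fin n := ⟨i.val + 1, by have := i.isLt; omega⟩

/-- The colored descent number `d(w)` of a colored permutation, given by the underlying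
permutation `w` and the color vector `c`. -/
def cdes {n α : ℕ} (w : Equiv.Perm (Fin n)) (c : Fin n → ZMod α) : ℕ :=
  (univ.filter (fun i : Fin (n - 1) =>
    c (lo n i) ≠ c (hi n i) ∨ (c (lo n i) = c (hi n i) ∧ w (hi n i) < w (lo n i)))).card

/-- The flag descent statistic of a colored permutation. -/
def flagStat {n α : ℕ} (w : Equiv.Perm (Fin n)) (c : Fin n → ZMod α) : ℕ :=
  α * (univ.filter (fun i : Fin (n - 1) =>
        c (lo n i) = c (hi n i) ∧ w (hi n i) < w (lo n i))).card
  + α * (univ.filter (fun i : Fin (n - 1) =>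
        (c (lo n i)).val < (c (hi n i)).val)).card
  + (if h : 0 < n then (c ⟨0, h⟩).val else 0)

/-- The classical descent number of a permutation. -/
def des {n : ℕ} (w : Equiv.Perm (Fin n)) : ℕ :=
  (univ.filter (fun i : Fin (n - 1) => w (hi n i) < w (lo n i))).card

/-- The reversal of the underlying permutation (in one-line notation). -/
def rPerm {n : ℕ} (w : Equiv.Perm (Fin n)) : Equiv.Perm (Fin n) :=
  (Fin.revPerm : Equiv.Perm (Fin n)).trans w

/-- The reversed color vector with `c 0` subtracted from every color. -/
def rCol {n α : ℕ} (c : Fin n → ZMod α) : Fin n → ZMod α :=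
  fun i => c i.rev - (if h : 0 < n then c ⟨0, h⟩ else 0)

/-
Reverse the colored word and rotate every color by `-c₁`: `(w, c) ↦ (w ∘ rev, c ∘ rev - c₁)`.
This is an involution on colored permutations with last color `0`, and it sends the flag statistic
`f` to `α(n-1) - f`. Indeed, an adjacent pair with colors `a, b` contributes
`α([a = b ∧ descent] + [a < b])` before and, read backwards,
`α([b = a ∧ ascent] + [b - c₁ < a - c₁])` after; the two add up to `α(1 + [a < c₁] - [b < c₁])`,
which telescopes along the word to `α(n - 1 - [c₁ ≠ 0])`, and the first colors `c₁` and `-c₁`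
make up the missing `α[c₁ ≠ 0]`.
-/

namespace ZMod

theorem val_sub_eq_ite {α : ℕ} [NeZero α] (a t : ZMod α) :
    ((a - t).val : ℤ) = a.val - t.val + if a.val < t.val then (α : ℤ) else 0 := by
  split_ifs with h
  · have hne : t - a ≠ 0 := sub_ne_zero.mpr fun e => (e ▸ h).false
    have htv := val_lt t
    rw [← neg_sub, neg_val, if_neg hne, val_sub h.le]
    omega
  · rw [val_sub (not_lt.mp h)]
    omega

/-- Subtracting `t` keeps the order of two distinct residues unless `t` separates them. -/
theorem ite_val_lt_add_ite_val_sub_lt {α : ℕ} [NeZero α] {a b : ZMod α} (hab : a ≠ b)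
    (t : ZMod α) :
    ((if a.val < b.val then 1 else 0) + (if (b - t).val < (a - t).val then 1 else 0) : ℤ)
      = 1 + (if a.val < t.val then 1 else 0) - (if b.val < t.val then 1 else 0) := by
  have hne : a.val ≠ b.val := fun h => hab (val_injective _ h)
  have ha := val_sub_eq_ite a t
  have hb := val_sub_eq_ite b t
  have := val_lt a
  have := val_lt b
  have := val_lt t
  split_ifs at ha hb ⊢ <;> omega

theorem val_neg_add_val {α : ℕ} [NeZero α] (a : ZMod α) :
    (-a).val + a.val = if a = 0 then 0 else α := by
  rw [neg_val]
  split_ifs with h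
  · simp [h]
  · have := val_lt a
    omega

end ZMod

section FlagWeight

variable {α : ℕ} {β : Type*} [LinearOrder β]

def flagWeight (a b : ZMod α) (u v : β) : ℤ :=
  (if a = b ∧ v < u then 1 else 0) + (if a.val < b.val then 1 else 0)

theorem flagWeight_sub_add_flagWeight [NeZero α] (a b t : ZMod α) {u v : β} (huv : u ≠ v) :
    flagWeight (b - t) (a - t) v u + flagWeight a b u v
      = 1 + (if a.val < t.val then 1 else 0) - (if b.val < t.val then 1 else 0) := by
  unfold flagWeight
  by_cases hab : a = b
  · subst hab
    rcases huv.lt_or_gt with h | h <;> simp [h, h.not_gt]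
  · have hab' : b - t ≠ a - t := fun e => hab (sub_left_inj.mp e).symm
    simp only [hab, hab', false_and, if_false, zero_add]
    linarith [ZMod.ite_val_lt_add_ite_val_sub_lt hab t]

end FlagWeight

section Reversal

variable {n α : ℕ}

theorem lo_rev (j : Fin (n - 1)) : lo n j.rev = (hi n j).rev := by
  ext; simp only [lo, hi, Fin.val_rev]; omega

theorem hi_rev (j : Fin (n - 1)) : hi n j.rev = (lo n j).rev := by
  ext; simp only [lo, hi, Fin.val_rev]; omega

theorem sum_sub_lo_hi {M : Type*} [AddCommGroup M] (hn : 0 < n) (f : Fin n → M) :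
    ∑ j : Fin (n - 1), (f (lo n j) - f (hi n j))
      = f ⟨0, hn⟩ - f ⟨n - 1, Nat.sub_one_lt_of_lt hn⟩ := by
  set g : ℕ → M := fun m => if h : m < n then f ⟨m, h⟩ else 0
  have hg : ∀ j : Fin (n - 1), f (lo n j) - f (hi n j) = g j - g (j + 1) := fun j => by
    simp only [g, dif_pos (show (j : ℕ) < n by omega), dif_pos (show (j : ℕ) + 1 < n by omega)]
    rfl
  rw [Finset.sum_congr rfl fun j _ => hg j, Fin.sum_univ_eq_sum_range (fun m => g m - g (m + 1)),
    sum_range_sub']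
  simp only [g, dif_pos hn, dif_pos (show n - 1 < n by omega)]

theorem rPerm_apply (w : Equiv.Perm (Fin n)) (i : Fin n) : rPerm w i = w i.rev := rfl

theorem rPerm_rPerm (w : Equiv.Perm (Fin n)) : rPerm (rPerm w) = w := by
  ext; simp [rPerm_apply]

theorem rCol_apply (hn : 0 < n) (c : Fin n → ZMod α) (i : Fin n) :
    rCol c i = c i.rev - c ⟨0, hn⟩ := by
  simp [rCol, dif_pos hn]

theorem rev_mk_zero (hn : 0 < n) :
    (⟨0, hn⟩ : Fin n).rev = ⟨n - 1, Nat.sub_one_lt_of_lt hn⟩ := by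
  ext; simp [Fin.rev]

theorem rCol_last (hn : 0 < n) (c : Fin n → ZMod α) :
    rCol c ⟨n - 1, Nat.sub_one_lt_of_lt hn⟩ = 0 := by
  rw [rCol_apply hn, ← rev_mk_zero hn, Fin.rev_rev, sub_self]

theorem rCol_rCol (hn : 0 < n) (c : Fin n → ZMod α)
    (hc : c ⟨n - 1, Nat.sub_one_lt_of_lt hn⟩ = 0) :
    rCol (rCol c) = c := by
  funext i
  rw [rCol_apply hn, rCol_apply hn, rCol_apply hn, Fin.rev_rev, rev_mk_zero hn, hc]
  ring

end Reversal

section FlagStat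

variable {n α : ℕ}

theorem flagStat_eq_sum_flagWeight (hn : 0 < n) (w : Equiv.Perm (Fin n)) (c : Fin n → ZMod α) :
    (flagStat w c : ℤ) =
      α * ∑ i, flagWeight (c (lo n i)) (c (hi n i)) (w (lo n i)) (w (hi n i))
        + (c ⟨0, hn⟩).val := by
  simp only [flagStat, flagWeight, dif_pos hn, sum_add_distrib]
  push_cast
  rw [natCast_card_filter, natCast_card_filter]
  ring

theorem sum_flagWeight_reverse_add_sum_flagWeight [NeZero α] (hn : 0 < n)
    (w : Equiv.Perm (Fin n)) (c : Fin n → ZMod α) (t : ZMod α) :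
    ∑ j, flagWeight (c (hi n j) - t) (c (lo n j) - t) (w (hi n j)) (w (lo n j))
      + ∑ j, flagWeight (c (lo n j)) (c (hi n j)) (w (lo n j)) (w (hi n j))
      = (n - 1 : ℕ) + (if (c ⟨0, hn⟩).val < t.val then 1 else 0)
        - (if (c ⟨n - 1, Nat.sub_one_lt_of_lt hn⟩).val < t.val then 1 else 0) := by
  have hlu : ∀ j, w (lo n j) ≠ w (hi n j) := fun j e => by
    simpa [lo, hi] using congrArg Fin.val (w.injective e)
  rw [← sum_add_distrib, sum_congr rfl fun j _ => flagWeight_sub_add_flagWeight _ _ t (hlu j)]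
  simp only [add_sub_assoc, sum_add_distrib, sum_const, card_univ, Fintype.card_fin,
    sum_sub_lo_hi hn (fun i => if (c i).val < t.val then (1 : ℤ) else 0), nsmul_eq_mul, mul_one]

theorem flagStat_rPerm_rCol_add_flagStat [NeZero α] (hn : 0 < n) (w : Equiv.Perm (Fin n))
    (c : Fin n → ZMod α) (hc : c ⟨n - 1, Nat.sub_one_lt_of_lt hn⟩ = 0) :
    (flagStat (rPerm w) (rCol c) : ℤ) + flagStat w c = α * (n - 1 : ℕ) := by
  have hrev : ∑ i, flagWeight (rCol c (lo n i)) (rCol c (hi n i)) (rPerm w (lo n i))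
      (rPerm w (hi n i)) = ∑ j, flagWeight (c (hi n j) - c ⟨0, hn⟩) (c (lo n j) - c ⟨0, hn⟩)
      (w (hi n j)) (w (lo n j)) := by
    rw [← Fintype.sum_equiv Fin.revPerm _ _ fun j => rfl]
    simp only [Fin.revPerm_apply, lo_rev, hi_rev, rCol_apply hn, rPerm_apply, Fin.rev_rev]
  have hweights := sum_flagWeight_reverse_add_sum_flagWeight hn w c (c ⟨0, hn⟩)
  have hfirst : ((-c ⟨0, hn⟩).val + (c ⟨0, hn⟩).val : ℤ) = if c ⟨0, hn⟩ = 0 then 0 else α := by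
    exact_mod_cast ZMod.val_neg_add_val (c ⟨0, hn⟩)
  rw [flagStat_eq_sum_flagWeight hn, flagStat_eq_sum_flagWeight hn, hrev, rCol_apply hn,
    rev_mk_zero hn, hc, zero_sub]
  simp only [hc, lt_self_iff_false, if_false, ZMod.val_zero, ZMod.val_pos, ne_eq, ite_not]
    at hweights
  split_ifs at hweights hfirst <;> linear_combination (α : ℤ) * hweights + hfirst

end FlagStat

/-- The number of colored permutations with last color `0` and flag descent statistic `k`
equals the number with flag descent statistic `α(n-1) - k`, for every integer `k`. -/
theorem flag_statistic_symmetric_counts (n α : ℕ) (hn : 0 < n) [NeZero α]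
    (k : ℤ) :
    ((univ : Finset (Equiv.Perm (Fin n) × (Fin n → ZMod α))).filter
        (fun p => p.2 ⟨n - 1, by omega⟩ = 0 ∧ (flagStat p.1 p.2 : ℤ) = k)).card
      = ((univ : Finset (Equiv.Perm (Fin n) × (Fin n → ZMod α))).filter
        (fun p => p.2 ⟨n - 1, by omega⟩ = 0 ∧
          (flagStat p.1 p.2 : ℤ) = (α : ℤ) * (n - 1 : ℕ) - k)).card := by
  set reflect : Equiv.Perm (Fin n) × (Fin n → ZMod α) → Equiv.Perm (Fin n) × (Fin n → ZMod α) :=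
    fun p => (rPerm p.1, rCol p.2)
  have reflect_reflect {p} (hp : p.2 ⟨n - 1, by omega⟩ = 0) : reflect (reflect p) = p :=
    Prod.ext (rPerm_rPerm p.1) (rCol_rCol hn p.2 hp)
  refine card_nbij' reflect reflect ?_ ?_ (fun p hp => reflect_reflect (mem_filter.mp hp).2.1)
    (fun p hp => reflect_reflect (mem_filter.mp hp).2.1)
  all_goals
    rintro p hp
    simp only [coe_filter, mem_univ, true_and, Set.mem_ofPred_eq] at hp ⊢
    have := flagStat_rPerm_rCol_add_flagStat hn p.1 p.2 hp.1
    exact ⟨rCol_last hn p.2, by simp only [reflect]; omega⟩
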